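/- A system G under the DO-based protocol is DO-based current-state-at-synchronization opaque with respect to the protocol and secret states X_S ⊆ X if and only if for every s ∈ L(G) the DO-based current-state estimate intersects the non-secret states: E^c(P_Υ(s), X₀) ∩ (X ∖ X_S) ≠ ∅. -/
import Mathlib


namespace DES

variable {X E ι : Type*}

/-- Extended transition function: `δ(x,ε)={x}`, `δ(x,σs)=⋃_{y∈δ(x,σ)} δ(y,s)`. -/
def deltaStar (δ : X → E → Set X) : X → List E → Set X
  | x, [] => {x}
  | x, a :: s => {z | ∃ y ∈ δ x a, z ∈ deltaStar δ y s}

/-- Transition function extended to sets of states. -/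
def deltaSet (δ : X → E → Set X) (S : Set X) (s : List E) : Set X :=
  {z | ∃ x ∈ S, z ∈ deltaStar δ x s}

/-- `L(G,x)`: strings with a run from `x`. -/
def Lang (δ : X → E → Set X) (x : X) : Set (List E) :=
  {s | deltaStar δ x s ≠ ∅}

/-- `L(G,X')`. -/
def LangSet (δ : X → E → Set X) (S : Set X) : Set (List E) :=
  {s | ∃ x ∈ S, s ∈ Lang δ x}

open Classical in
/-- Natural projection onto a set of observable events. -/
noncomputable def proj (Ei : Set E) : List E → List E
  | [] => []
  | a :: s => if a ∈ Ei then a :: proj Ei s else proj Ei s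

/-- `E_I = ⋃_i E_i`. -/
def EI (Es : ι → Set E) : Set E := {e | ∃ i, e ∈ Es i}

/-- `R_σ(S)` for `σ ∈ E_I ∪ {ε}` (encoded via `Option E`, `none = ε`). -/
def Robs (δ : X → E → Set X) (Es : ι → Set E) (l : Option E) (S : Set X) : Set X :=
  {x | ∃ u : List E, x ∈ deltaSet δ S u ∧ proj (EI Es) u = l.toList}

/-- Unobservable reach `UR(S) = R_ε(S)`. -/
def UR (δ : X → E → Set X) (Es : ι → Set E) (S : Set X) : Set X :=
  Robs δ Es none S

/-- The initial SI-state `τ₀ = (ε,…,ε)`. -/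
def tau0 : ι → List E := fun _ => []

/-- `τ ⊨ Υ`: no site's record has reached its threshold. -/
def satU (κ : ι → ℕ) (τ : ι → List E) : Prop := ∀ i, (τ i).length < κ i

/-- `τ` is a critical SI-state: some site's record has length `κ_i`. -/
def isCSI (κ : ι → ℕ) (τ : ι → List E) : Prop := ∃ i, (τ i).length = κ i

open Classical in
/-- Each site observing `σ` appends it to its record. -/
noncomputable def absorb (Es : ι → Set E) (τ : ι → List E) (a : E) : ι → List E :=
  fun i => if a ∈ Es i then τ i ++ [a] else τ i

/-- The absorbing function `ĥ(τ,σ)=τ'`, as a relation (defined only for `τ ⊨ Υ`, `σ ∈ E_I`). -/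
def hhatRel (κ : ι → ℕ) (Es : ι → Set E) (τ : ι → List E) (σ : E) (τ' : ι → List E) : Prop :=
  satU κ τ ∧ σ ∈ EI Es ∧ τ' = absorb Es τ σ

mutual
  /-- Transition relation `h_a` of the CSS structure. -/
  inductive Ha (δ : X → E → Set X) (Es : ι → Set E) (κ : ι → ℕ) :
      X × X × ℕ → E → (ι → List E) → Prop where
    | mk (ρ : X × X × ℕ) (σ : E) (τ τ' : ι → List E) (σ' : Option E) :
        Hr δ Es κ τ' σ' ρ → hhatRel κ Es τ' σ τ →
        Robs δ Es (some σ) {ρ.2.1} ≠ ∅ →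
        Ha δ Es κ ρ σ τ
  /-- Transition relation `h_r` of the CSS structure. -/
  inductive Hr (δ : X → E → Set X) (Es : ι → Set E) (κ : ι → ℕ) :
      (ι → List E) → Option E → X × X × ℕ → Prop where
    | init (x : X) : Hr δ Es κ tau0 none (x, x, 0)
    | step (τ : ι → List E) (σ : E) (ρ' : X × X × ℕ) (x : X) :
        Ha δ Es κ ρ' σ τ → x ∈ Robs δ Es (some σ) {ρ'.2.1} →
        Hr δ Es κ τ (some σ) (ρ'.1, x, ρ'.2.2 + 1)
end

/-- The set `T` of SI-states of the CSS structure. -/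
def Tset (δ : X → E → Set X) (Es : ι → Set E) (κ : ι → ℕ) : Set (ι → List E) :=
  {τ | τ = tau0 ∨ ∃ ρ σ, Ha δ Es κ ρ σ τ}

/-- The set `T_c` of critical SI-states of the CSS structure. -/
def Tc (δ : X → E → Set X) (Es : ι → Set E) (κ : ι → ℕ) : Set (ι → List E) :=
  {τ | τ ∈ Tset δ Es κ ∧ isCSI κ τ}

/-- `M(τ)`: pairs of states connected by `h_r`-transitions from `τ`. -/
def Mset (δ : X → E → Set X) (Es : ι → Set E) (κ : ι → ℕ) (τ : ι → List E) : Set (X × X) :=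
  {p | ∃ (σ : E) (d : ℕ), Hr δ Es κ τ (some σ) (p.1, p.2, d)}

open Classical in
/-- One step of the synchronization process: the state is
(transmitted SI-states, current record, current `\tilde{s}`, suffix after `\tilde{s}`). -/
noncomputable def syncStep (κ : ι → ℕ) (Es : ι → Set E)
    (st : List (ι → List E) × (ι → List E) × List E × List E) (a : E) :
    List (ι → List E) × (ι → List E) × List E × List E :=
  let τ' := absorb Es st.2.1 a
  if isCSI κ τ' then (st.1 ++ [τ'], tau0, st.2.2.1 ++ st.2.2.2 ++ [a], [])
  else (st.1, τ', st.2.2.1, st.2.2.2 ++ [a])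

/-- Processing a whole string through the synchronization protocol. -/
noncomputable def syncFold (κ : ι → ℕ) (Es : ι → Set E) (s : List E) :
    List (ι → List E) × (ι → List E) × List E × List E :=
  s.foldl (syncStep κ Es) ([], tau0, [], [])

/-- The DO-projection `P_Υ(s)`: the sequence of CSI-states transmitted along `s`. -/
noncomputable def doProj (κ : ι → ℕ) (Es : ι → Set E) (s : List E) : List (ι → List E) :=
  (syncFold κ Es s).1

/-- The SI-state `SI(s) = (P_1(s/\tilde{s}),…,P_m(s/\tilde{s}))`. -/
noncomputable def SIst (κ : ι → ℕ) (Es : ι → Set E) (s : List E) : ι → List E :=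
  (syncFold κ Es s).2.1

/-- `\tilde{s}`: the longest prefix of `s` immediately followed by a synchronization. -/
noncomputable def tilde (κ : ι → ℕ) (Es : ι → Set E) (s : List E) : List E :=
  (syncFold κ Es s).2.2.1

/-- `SI(\tilde{s})` in the sense of the information recorded right before the
last synchronization: the last transmitted SI-state (`τ₀` if none). -/
noncomputable def SIpre (κ : ι → ℕ) (Es : ι → Set E) (s : List E) : ι → List E :=
  (doProj κ Es s).getLastD tau0

/-- DO-based current-state estimate `E^c(ι,S)`. -/
def Ec (δ : X → E → Set X) (κ : ι → ℕ) (Es : ι → Set E)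
    (ιs : List (ι → List E)) (S : Set X) : Set X :=
  {x | ∃ x₀ ∈ S, ∃ u ∈ Lang δ x₀, doProj κ Es u = ιs ∧
      x ∈ UR δ Es (deltaStar δ x₀ (tilde κ Es u))}

/-- DO-based initial-state estimate `E^i(ι,S)`. -/
def Eist (δ : X → E → Set X) (κ : ι → ℕ) (Es : ι → Set E)
    (ιs : List (ι → List E)) (S : Set X) : Set X :=
  {x₀ | x₀ ∈ S ∧ ∃ u ∈ Lang δ x₀, doProj κ Es u = ιs}

/-- `M(τ)` described directly: pairs `(x,x')` such that some string `t` with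
`P_i(t)=τ^(i)` for all `i` leads from `x` to `x'` in `G`. -/
def Mdir (δ : X → E → Set X) (Es : ι → Set E) (τ : ι → List E) : Set (X × X) :=
  {p | ∃ t : List E, p.2 ∈ deltaStar δ p.1 t ∧ ∀ i, proj (Es i) t = τ i}

/-- The CSI-states arising along some execution of the system. -/
def TcExec (δ : X → E → Set X) (Es : ι → Set E) (κ : ι → ℕ) (X0 : Set X) :
    Set (ι → List E) :=
  {τ | isCSI κ τ ∧ ∃ s ∈ LangSet δ X0, τ ∈ doProj κ Es s}

/-- DO-observer transition function `f_obs(q,τ)` (empty = undefined). -/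
def fObs (δ : X → E → Set X) (κ : ι → ℕ) (Es : ι → Set E)
    (q : Set X) (τ : ι → List E) : Set X :=
  {x | ∃ x' ∈ q, x ∈ Ec δ κ Es [τ] {x'}}

/-- `f_obs` extended to sequences of CSI-states. -/
def fObsSeq (δ : X → E → Set X) (κ : ι → ℕ) (Es : ι → Set E)
    (q : Set X) (ιs : List (ι → List E)) : Set X :=
  ιs.foldl (fObs δ κ Es) q

/-- Initial-state-estimator transition function `f^i_obs(m,τ)` (empty = undefined). -/
def fiObs (δ : X → E → Set X) (Es : ι → Set E)
    (m : Set (X × X)) (τ : ι → List E) : Set (X × X) :=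
  {p | ∃ x₂, (p.1, x₂) ∈ m ∧ (x₂, p.2) ∈ Mdir δ Es τ}

/-- `f^i_obs` extended to sequences of CSI-states. -/
def fiObsSeq (δ : X → E → Set X) (Es : ι → Set E)
    (m₀ : Set (X × X)) (ιs : List (ι → List E)) : Set (X × X) :=
  ιs.foldl (fiObs δ Es) m₀

/-- `F(m)`: first components of pairs in `m`. -/
def Fset (m : Set (X × X)) : Set X := {x | ∃ x', (x, x') ∈ m}

/-- Initial state `X^i_{0,obs} = {(x₀,x₀) : x₀ ∈ X₀}` of the initial-state estimator. -/
def X0i (X0 : Set X) : Set (X × X) := {p | p.1 ∈ X0 ∧ p.2 = p.1}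

/-- Synchronization-reversed-observer transition function `f_{R,obs}(q,τ)` (empty = undefined). -/
def fRObs (δ : X → E → Set X) (Es : ι → Set E) (q : Set X) (τ : ι → List E) : Set X :=
  {x | ∃ x' ∈ q, (x, x') ∈ Mdir δ Es τ}

/-- `f_{R,obs}` extended to sequences of CSI-states. -/
def fRObsSeq (δ : X → E → Set X) (Es : ι → Set E) (q : Set X) (ιs : List (ι → List E)) : Set X :=
  ιs.foldl (fRObs δ Es) q

/-- DO-based initial-state opacity w.r.t. the protocol `(κ,Es)` and secret initial states `XS`. -/
def DOISO (δ : X → E → Set X) (Es : ι → Set E) (κ : ι → ℕ) (X0 XS : Set X) : Prop :=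
  ∀ s ∈ LangSet δ XS, ∃ s' ∈ LangSet δ (X0 \ XS), doProj κ Es s = doProj κ Es s'

/-- DO-based current-state-at-synchronization opacity w.r.t. `(κ,Es)` and secret states `XS`. -/
def DOCSSO (δ : X → E → Set X) (Es : ι → Set E) (κ : ι → ℕ) (X0 XS : Set X) : Prop :=
  ∀ x₀ ∈ X0, ∀ s ∈ Lang δ x₀,
    UR δ Es (deltaStar δ x₀ (tilde κ Es s)) ∩ XS ≠ ∅ →
    ∃ x₀' ∈ X0, ∃ s' ∈ Lang δ x₀',
      doProj κ Es s = doProj κ Es s' ∧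
      UR δ Es (deltaStar δ x₀' (tilde κ Es s')) ∩ XSᶜ ≠ ∅

lemma dsAppend (δ : X → E → Set X) (u v : List E) (x : X) :
    deltaStar δ x (u ++ v) = {z | ∃ y ∈ deltaStar δ x u, z ∈ deltaStar δ y v} := by
  induction u generalizing x with
  | nil => simp [deltaStar]
  | cons a u ih =>
    ext z
    simp only [List.cons_append, deltaStar, Set.mem_setOf_eq, List.append_eq, ih]
    tauto

lemma syncFold_inv (κ : ι → ℕ) (Es : ι → Set E) (s : List E)
    (st : List (ι → List E) × (ι → List E) × List E × List E) :
    (s.foldl (syncStep κ Es) st).2.2.1 ++ (s.foldl (syncStep κ Es) st).2.2.2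
      = st.2.2.1 ++ st.2.2.2 ++ s := by
  induction s generalizing st with
  | nil => simp
  | cons a s ih =>
    rw [List.foldl_cons, ih]
    unfold syncStep
    by_cases h : isCSI κ (absorb Es st.2.1 a) <;> simp [h]

lemma tilde_prefix (κ : ι → ℕ) (Es : ι → Set E) (s : List E) :
    tilde κ Es s ++ (syncFold κ Es s).2.2.2 = s := by
  have := syncFold_inv κ Es s ([], tau0, [], [])
  simpa [tilde, syncFold] using this

lemma mem_UR_self (δ : X → E → Set X) (Es : ι → Set E) {S : Set X} {y : X}
    (hy : y ∈ S) : y ∈ UR δ Es S := by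
  refine ⟨[], ⟨y, hy, ?_⟩, rfl⟩
  simp [deltaStar]

/-- `G` is DO-based current-state-at-synchronization opaque w.r.t. the
protocol and `X_S ⊆ X` iff for every `s ∈ L(G)`, `E^c(P_Υ(s),X₀) ∩ (X ∖ X_S) ≠ ∅`. -/
theorem stmt13 [Fintype X] [Fintype E] [Fintype ι]
    (δ : X → E → Set X) (Es : ι → Set E) (κ : ι → ℕ) (X0 XS : Set X) :
    DOCSSO δ Es κ X0 XS ↔
      ∀ s ∈ LangSet δ X0, Ec δ κ Es (doProj κ Es s) X0 ∩ XSᶜ ≠ ∅ := by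
  constructor
  · intro h s hs
    obtain ⟨x₀, hx₀, hsx⟩ := hs
    by_cases hsec : UR δ Es (deltaStar δ x₀ (tilde κ Es s)) ∩ XS ≠ ∅
    · obtain ⟨x₀', hx₀', s', hs', hproj, hne⟩ := h x₀ hx₀ s hsx hsec
      obtain ⟨x, hx⟩ := Set.nonempty_iff_ne_empty.mpr hne
      intro hcon
      have hmem : x ∈ Ec δ κ Es (doProj κ Es s) X0 ∩ XSᶜ :=
        ⟨⟨x₀', hx₀', s', hs', hproj.symm, hx.1⟩, hx.2⟩
      rw [hcon] at hmem; exact hmem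
    · push_neg at hsec
      have hpre : deltaStar δ x₀ (tilde κ Es s) ≠ ∅ := by
        intro hemp
        apply hsx
        have hdecomp := tilde_prefix κ Es s
        rw [← hdecomp, dsAppend, hemp]
        ext z; simp
      obtain ⟨y, hy⟩ := Set.nonempty_iff_ne_empty.mpr hpre
      have hyUR : y ∈ UR δ Es (deltaStar δ x₀ (tilde κ Es s)) := mem_UR_self δ Es hy
      have hyc : y ∈ XSᶜ := by
        intro hyS
        have : y ∈ UR δ Es (deltaStar δ x₀ (tilde κ Es s)) ∩ XS := ⟨hyUR, hyS⟩
        rw [hsec] at this; exact this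
      intro hcon
      have hmem : y ∈ Ec δ κ Es (doProj κ Es s) X0 ∩ XSᶜ :=
        ⟨⟨x₀, hx₀, s, hsx, rfl, hyUR⟩, hyc⟩
      rw [hcon] at hmem; exact hmem
  · intro h x₀ hx₀ s hs _
    have hne := h s ⟨x₀, hx₀, hs⟩
    obtain ⟨x, hx⟩ := Set.nonempty_iff_ne_empty.mpr hne
    obtain ⟨⟨x₀', hx₀', u, hu, hproj, hUR⟩, hxc⟩ := hx
    refine ⟨x₀', hx₀', u, hu, hproj.symm, ?_⟩
    intro hemp
    have : x ∈ (∅ : Set X) := hemp ▸ (⟨hUR, hxc⟩ :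
      x ∈ UR δ Es (deltaStar δ x₀' (tilde κ Es u)) ∩ XSᶜ)
    exact this

end DES
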